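/- arXiv:2304.00550 — 2 statements merged into one kernel-verified Lean document; each statement's English description precedes it below -/
import Mathlib

section
/- Let X be a real normed vector space of finite dimension, let x_1,…,x_n be points of X (n ≥ 1), and let p ∈ ft(x_1,…,x_n) with p ≠ x_i for all i. Suppose φ_1,…,φ_n are continuous linear functionals with ‖φ_i‖ = 1, φ_i(x_i − p) = ‖x_i − p‖ for each i, and Σ_{i=1}^n φ_i = 0. Then ft(x_1,…,x_n) = ⋂_{i=1}^n C(x_i, φ_i), where C(x, φ) = { x − a : a ∈ X, φ(a) = ‖a‖ }. -/
/-- The Fermat–Torricelli set of the points `x 0, …, x (n-1)`: the set of points minimizing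
the sum of distances to the `x i`. -/
def ft {X : Type*} [NormedAddCommGroup X] {n : ℕ} (x : Fin n → X) : Set X :=
  {p | ∀ q : X, ∑ i, ‖p - x i‖ ≤ ∑ i, ‖q - x i‖}

/-- The cone `C(x, φ) = { x - a : φ(a) = ‖a‖ }`. -/
def cone {X : Type*} [NormedAddCommGroup X] [NormedSpace ℝ X]
    (x : X) (φ : X →L[ℝ] ℝ) : Set X :=
  {y | ∃ a : X, φ a = ‖a‖ ∧ y = x - a}

/-!
Since `∑ φᵢ = 0`, the quantity `∑ φᵢ (xᵢ - q)` does not depend on `q`, and since `‖φᵢ‖ ≤ 1`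
it is a lower bound for `∑ ‖q - xᵢ‖`. The bound is attained at `p`, so it is the minimum, and
`q` is a minimizer exactly when every termwise inequality `φᵢ (xᵢ - q) ≤ ‖xᵢ - q‖` is an
equality, i.e. when `q ∈ C(xᵢ, φᵢ)` for every `i`.
-/

section

variable {X : Type*} [NormedAddCommGroup X]

theorem mem_ft_iff_of_le_of_eq {n : ℕ} {x : Fin n → X} {c : ℝ} {p q : X}
    (hle : ∀ q, c ≤ ∑ i, ‖q - x i‖) (hp : ∑ i, ‖p - x i‖ = c) :
    q ∈ ft x ↔ ∑ i, ‖q - x i‖ = c :=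
  ⟨fun hq => le_antisymm (hp ▸ hq p) (hle q), fun hq r => hq ▸ hle r⟩

variable [NormedSpace ℝ X]

theorem mem_cone_iff {x y : X} {φ : X →L[ℝ] ℝ} : y ∈ cone x φ ↔ φ (x - y) = ‖x - y‖ := by
  constructor
  · rintro ⟨a, ha, rfl⟩
    simpa using ha
  · exact fun h => ⟨x - y, h, (sub_sub_cancel x y).symm⟩

theorem ContinuousLinearMap.apply_le_norm_of_norm_le_one {φ : X →L[ℝ] ℝ} (hφ : ‖φ‖ ≤ 1)
    (v : X) : φ v ≤ ‖v‖ :=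
  calc φ v ≤ ‖φ v‖ := le_abs_self _
    _ ≤ 1 * ‖v‖ := φ.le_of_opNorm_le hφ v
    _ = ‖v‖ := one_mul _

variable {n : ℕ} {x : Fin n → X} {φ : Fin n → X →L[ℝ] ℝ}

theorem sum_apply_sub_eq_of_sum_eq_zero (hsum : ∑ i, φ i = 0) (q : X) :
    ∑ i, φ i (x i - q) = ∑ i, φ i (x i) := by
  have hq : ∑ i, φ i q = 0 := by simpa using congrArg (fun ψ : X →L[ℝ] ℝ => ψ q) hsum
  simp only [map_sub, Finset.sum_sub_distrib, hq, sub_zero]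

theorem sum_apply_sub_le_sum_norm (hφ : ∀ i, ‖φ i‖ ≤ 1) (q : X) :
    ∑ i, φ i (x i - q) ≤ ∑ i, ‖q - x i‖ :=
  Finset.sum_le_sum fun i _ => norm_sub_rev q (x i) ▸ (φ i).apply_le_norm_of_norm_le_one (hφ i) _

theorem sum_norm_eq_sum_apply_sub_iff (hφ : ∀ i, ‖φ i‖ ≤ 1) (q : X) :
    ∑ i, ‖q - x i‖ = ∑ i, φ i (x i - q) ↔ ∀ i, φ i (x i - q) = ‖x i - q‖ := by
  simp_rw [eq_comm (a := ∑ i, ‖q - x i‖), norm_sub_rev q]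
  rw [Finset.sum_eq_sum_iff_of_le fun i _ => (φ i).apply_le_norm_of_norm_le_one (hφ i) _]
  simp

theorem mem_ft_iff_forall_apply_sub_eq_norm (hφ : ∀ i, ‖φ i‖ ≤ 1) (hsum : ∑ i, φ i = 0)
    {p q : X} (hp : ∀ i, φ i (x i - p) = ‖x i - p‖) :
    q ∈ ft x ↔ ∀ i, φ i (x i - q) = ‖x i - q‖ := by
  have hle (r : X) : ∑ i, φ i (x i) ≤ ∑ i, ‖r - x i‖ :=
    sum_apply_sub_eq_of_sum_eq_zero hsum r ▸ sum_apply_sub_le_sum_norm hφ r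
  have hmin : ∑ i, ‖p - x i‖ = ∑ i, φ i (x i) := by
    rw [← sum_apply_sub_eq_of_sum_eq_zero hsum p, sum_norm_eq_sum_apply_sub_iff hφ]
    exact hp
  rw [mem_ft_iff_of_le_of_eq hle hmin, ← sum_apply_sub_eq_of_sum_eq_zero hsum q,
    sum_norm_eq_sum_apply_sub_iff hφ]

end

theorem ft_eq_iInter_cones_general
    {X : Type*} [NormedAddCommGroup X] [NormedSpace ℝ X]
    {n : ℕ} (x : Fin n → X) (p : X)
    (φ : Fin n → (X →L[ℝ] ℝ))
    (hφ : ∀ i, ‖φ i‖ = 1 ∧ φ i (x i - p) = ‖x i - p‖)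
    (hsum : ∑ i, φ i = 0) :
    ft x = ⋂ i, cone (x i) (φ i) := by
  ext q
  simp only [Set.mem_iInter, mem_cone_iff]
  exact mem_ft_iff_forall_apply_sub_eq_norm (fun i => (hφ i).1.le) hsum fun i => (hφ i).2

theorem ft_eq_iInter_cones
    {X : Type*} [NormedAddCommGroup X] [NormedSpace ℝ X] [FiniteDimensional ℝ X]
    {n : ℕ} (hn : 1 ≤ n) (x : Fin n → X) (p : X)
    (hp : p ∈ ft x) (hpx : ∀ i, p ≠ x i)
    (φ : Fin n → (X →L[ℝ] ℝ))
    (hφ : ∀ i, ‖φ i‖ = 1 ∧ φ i (x i - p) = ‖x i - p‖)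
    (hsum : ∑ i, φ i = 0) :
    ft x = ⋂ i, cone (x i) (φ i) :=
  ft_eq_iInter_cones_general x p φ hφ hsum
end

section
/- Let X be a real normed vector space of dimension 2. Suppose there exist continuous linear functionals φ_1,…,φ_n on X (n ≥ 2) with ‖φ_i‖ = 1 for all i and Σ_{i=1}^n φ_i = 0, such that the faces F(φ_1),…,F(φ_{n−1}) each contain at least two distinct points and the face F(φ_n) is a singleton. Then there exist points x_1,…,x_n in X and a ≠ b in X such that the Fermat–Torricelli set ft(x_1,…,x_n) equals the closed segment with endpoints a and b. -/
/-- The face of the unit circle determined by a norm-one functional `φ`. -/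
def face {X : Type*} [NormedAddCommGroup X] [NormedSpace ℝ X] (φ : X →L[ℝ] ℝ) : Set X :=
  {u | ‖u‖ = 1 ∧ φ u = 1}

/-!
If `∑ φ i = 0` and every `‖φ i‖ ≤ 1`, then `∑ ‖p - x i‖ ≥ ∑ φ i (p - x i)`, and the right-hand
side does not depend on `p`. So as soon as one point attains equality, the Fermat–Torricelli set
consists of the points `p` with `φ i (p - x i) = ‖p - x i‖` for all `i`, i.e. `p - x i` lies in
the cone `ℝ≥0 • F(φ i)` over the face.

Let `F(φ j) = {u}` be the point-face and put `x j = 0`; then every minimizer lies on the ray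
`ℝ≥0 • u`. Two distinct points `a, b` of a flattening `F(φ i)` span the plane, so writing
`u = α a + β b`, both `w i = |α| a + |β| b` and `u + w i` lie in the cone over `F(φ i)`; put
`x i = -w i`. The minimizers then form a closed convex subset of the ray containing `0` and `u`,
bounded since `φ i u < 0` for some `i` (because `∑ φ i u = 0 < φ j u`): a segment `[0, T • u]`
with `T ≥ 1`.
-/

open Set Finset Module

lemma LinearIndependent.pair_of_apply_eq_one {K V : Type*} [Field K] [AddCommGroup V]
    [Module K V] (f : V →ₗ[K] K) {a b : V} (ha : f a = 1) (hb : f b = 1) (hab : a ≠ b) :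
    LinearIndependent K ![a, b] := by
  refine LinearIndependent.pair_iff.2 fun s t hst => ?_
  have hts : t = -s := by
    have := congrArg f hst
    simp only [map_add, map_smul, ha, hb, smul_eq_mul, mul_one, map_zero] at this
    linear_combination this
  subst hts
  have : s • (a - b) = 0 := by linear_combination (norm := module) hst
  rcases smul_eq_zero.1 this with hs | hab'
  · simp [hs]
  · exact absurd (sub_eq_zero.1 hab') hab

lemma image_smul_Icc_eq_segment {X : Type*} [AddCommGroup X] [Module ℝ X] (u : X) {T : ℝ}
    (hT : 0 ≤ T) : (fun t : ℝ => t • u) '' Icc 0 T = segment ℝ 0 (T • u) := by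
  rw [← segment_eq_Icc hT]
  simpa using image_segment ℝ (LinearMap.toSpanSingleton ℝ X u).toAffineMap 0 T

section NormedSpace

variable {X : Type*} [NormedAddCommGroup X] [NormedSpace ℝ X]

def faceCone (φ : X →L[ℝ] ℝ) : Set X := {v | φ v = ‖v‖}

section FaceCone

variable {φ : X →L[ℝ] ℝ}

lemma apply_le_norm_of_opNorm_le_one (hφ : ‖φ‖ ≤ 1) (v : X) : φ v ≤ ‖v‖ :=
  (le_abs_self _).trans <| (φ.le_of_opNorm_le hφ v).trans_eq (one_mul _)

lemma isClosed_faceCone : IsClosed (faceCone φ) :=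
  isClosed_eq φ.continuous continuous_norm

lemma zero_mem_faceCone : (0 : X) ∈ faceCone φ := by
  simp [faceCone]

lemma face_subset_faceCone : face φ ⊆ faceCone φ := fun _ ⟨hu, hφu⟩ => hφu.trans hu.symm

lemma smul_mem_faceCone {v : X} (hv : v ∈ faceCone φ) {t : ℝ} (ht : 0 ≤ t) :
    t • v ∈ faceCone φ := by
  show φ (t • v) = ‖t • v‖
  rw [map_smul, smul_eq_mul, norm_smul, Real.norm_of_nonneg ht, hv.out]

lemma add_mem_faceCone (hφ : ‖φ‖ ≤ 1) {v w : X} (hv : v ∈ faceCone φ) (hw : w ∈ faceCone φ) :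
    v + w ∈ faceCone φ :=
  le_antisymm (apply_le_norm_of_opNorm_le_one hφ _) <| calc
    ‖v + w‖ ≤ ‖v‖ + ‖w‖ := norm_add_le v w
    _ = φ (v + w) := by rw [map_add, hv.out, hw.out]

lemma convex_faceCone (hφ : ‖φ‖ ≤ 1) : Convex ℝ (faceCone φ) :=
  fun _ hv _ hw _ _ hs ht _ =>
    add_mem_faceCone hφ (smul_mem_faceCone hv hs) (smul_mem_faceCone hw ht)

lemma smul_mem_faceCone_iff {u : X} (hu : u ∈ face φ) {t : ℝ} :
    t • u ∈ faceCone φ ↔ 0 ≤ t := by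
  show φ (t • u) = ‖t • u‖ ↔ 0 ≤ t
  rw [map_smul, smul_eq_mul, norm_smul, hu.1, hu.2, mul_one, mul_one, Real.norm_eq_abs, eq_comm,
    abs_eq_self]

lemma eq_norm_smul_of_mem_faceCone {u v : X} (hu : face φ = {u}) (hv : v ∈ faceCone φ) :
    v = ‖v‖ • u := by
  rcases eq_or_ne v 0 with rfl | hv0
  · simp
  have hpos : 0 < ‖v‖ := norm_pos_iff.2 hv0
  have hface : ‖v‖⁻¹ • v ∈ face φ := by
    refine ⟨?_, ?_⟩
    · rw [norm_smul, norm_inv, norm_norm, inv_mul_cancel₀ hpos.ne']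
    · rw [map_smul, hv.out, smul_eq_mul, inv_mul_cancel₀ hpos.ne']
  rw [hu, mem_singleton_iff] at hface
  rw [← hface, smul_smul, mul_inv_cancel₀ hpos.ne', one_smul]

lemma bddAbove_setOf_smul_add_mem_faceCone {u : X} (hu : φ u < 0) (w : X) :
    BddAbove {t : ℝ | t • u + w ∈ faceCone φ} := by
  refine ⟨φ w / -φ u, fun t ht => ?_⟩
  have hnonneg : 0 ≤ t * φ u + φ w := by
    have h : φ (t • u + w) = ‖t • u + w‖ := ht
    rw [map_add, map_smul, smul_eq_mul] at h
    exact h ▸ norm_nonneg _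
  rw [le_div_iff₀ (neg_pos.2 hu)]
  linarith

lemma exists_mem_faceCone_add_mem_faceCone (hd : finrank ℝ X = 2) (hφ : ‖φ‖ ≤ 1) {a b : X}
    (hab : a ≠ b) (ha : a ∈ face φ) (hb : b ∈ face φ) (v : X) :
    ∃ w ∈ faceCone φ, v + w ∈ faceCone φ := by
  have hspan : Submodule.span ℝ {b, a} = ⊤ := by
    have hli := LinearIndependent.pair_of_apply_eq_one (φ : X →ₗ[ℝ] ℝ) ha.2 hb.2 hab
    simpa using hli.span_eq_top_of_card_eq_finrank (by simp [hd])
  obtain ⟨β, α, rfl⟩ := Submodule.mem_span_pair.1 (hspan ▸ Submodule.mem_top : v ∈ _)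
  have hcomb : ∀ s t : ℝ, 0 ≤ s → 0 ≤ t → s • a + t • b ∈ faceCone φ := fun s t hs ht =>
    add_mem_faceCone hφ (smul_mem_faceCone (face_subset_faceCone ha) hs)
      (smul_mem_faceCone (face_subset_faceCone hb) ht)
  refine ⟨|α| • a + |β| • b, hcomb _ _ (abs_nonneg α) (abs_nonneg β), ?_⟩
  convert hcomb (α + |α|) (β + |β|) (add_abs_nonneg α) (add_abs_nonneg β) using 1
  module

end FaceCone

lemma ft_eq_setOf_forall_sub_mem_faceCone {n : ℕ} {φ : Fin n → X →L[ℝ] ℝ}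
    (hnorm : ∀ i, ‖φ i‖ ≤ 1) (hsum : ∑ i, φ i = 0) {x : Fin n → X} {p₀ : X}
    (hp₀ : ∀ i, p₀ - x i ∈ faceCone (φ i)) :
    ft x = {p | ∀ i, p - x i ∈ faceCone (φ i)} := by
  have hle : ∀ p, ∑ i, φ i (p - x i) ≤ ∑ i, ‖p - x i‖ := fun p =>
    sum_le_sum fun i _ => apply_le_norm_of_opNorm_le_one (hnorm i) _
  have hconst : ∀ p, ∑ i, φ i (p - x i) = ∑ i, φ i (p₀ - x i) := fun p => by
    simp only [map_sub, sum_sub_distrib, ← _root_.sum_apply, hsum, zero_apply]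
  have hp₀min : ∑ i, ‖p₀ - x i‖ = ∑ i, φ i (p₀ - x i) := sum_congr rfl fun i _ => (hp₀ i).symm
  ext p
  constructor
  · intro hp i
    refine ((sum_eq_sum_iff_of_le fun i _ =>
      apply_le_norm_of_opNorm_le_one (hnorm i) (p - x i)).1 ?_ i (mem_univ i))
    exact le_antisymm (hle p) ((hp p₀).trans (hp₀min.trans (hconst p).symm).le)
  · intro hp q
    calc ∑ i, ‖p - x i‖ = ∑ i, φ i (p - x i) := sum_congr rfl fun i _ => (hp i).symm
      _ = ∑ i, φ i (q - x i) := (hconst p).trans (hconst q).symm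
      _ ≤ ∑ i, ‖q - x i‖ := hle q

theorem exists_ft_neg_eq_segment {n : ℕ} {φ : Fin n → X →L[ℝ] ℝ} (hnorm : ∀ i, ‖φ i‖ ≤ 1)
    (hsum : ∑ i, φ i = 0) {j : Fin n} {u : X} (hu : face (φ j) = {u}) {w : Fin n → X}
    (hw : ∀ i, w i ∈ faceCone (φ i)) (huw : ∀ i, u + w i ∈ faceCone (φ i)) (hwj : w j = 0) :
    ∃ T : ℝ, 1 ≤ T ∧ ft (-w) = segment ℝ 0 (T • u) := by
  have huj : u ∈ face (φ j) := hu ▸ mem_singleton u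
  set A := {t : ℝ | ∀ i, t • u + w i ∈ faceCone (φ i)}
  have hft : ft (-w) = (fun t : ℝ => t • u) '' A := by
    rw [ft_eq_setOf_forall_sub_mem_faceCone hnorm hsum (p₀ := 0) (by simpa using hw)]
    ext p
    simp only [Pi.neg_apply, sub_neg_eq_add]
    constructor
    · intro hp
      have hpu := eq_norm_smul_of_mem_faceCone hu (by simpa [hwj] using hp j)
      exact ⟨‖p‖, fun i => hpu ▸ hp i, hpu.symm⟩
    · rintro ⟨t, ht, rfl⟩
      exact ht
  have hleast : IsLeast A 0 := ⟨fun i => by simpa using hw i,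
    fun t ht => (smul_mem_faceCone_iff huj).1 (by simpa [hwj] using ht j)⟩
  obtain ⟨i, hi⟩ : ∃ i, φ i u < 0 := by
    by_contra! h
    have : φ j u ≤ ∑ i, φ i u := single_le_sum (fun i _ => h i) (mem_univ j)
    rw [← _root_.sum_apply, hsum, zero_apply, huj.2] at this
    linarith
  have hbdd : BddAbove A := (bddAbove_setOf_smul_add_mem_faceCone hi (w i)).mono fun t ht => ht i
  have hconv : Convex ℝ A := by
    simp only [A, ofPred_forall]
    exact convex_iInter fun i =>
      ((convex_faceCone (hnorm i)).translate_preimage_left (w i)).linear_preimage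
        (LinearMap.toSpanSingleton ℝ X u)
  have hclosed : IsClosed A := by
    simp only [A, ofPred_forall]
    exact isClosed_iInter fun i => isClosed_faceCone.preimage (by fun_prop)
  have hA : A = Icc 0 (sSup A) := by
    simpa [hleast.csInf_eq] using eq_Icc_csInf_csSup_of_connected_bdd_closed
      ⟨hleast.nonempty, hconv.isPreconnected⟩ hleast.bddBelow hbdd hclosed
  have hT : 1 ≤ sSup A := le_csSup hbdd fun i => by simpa using huw i
  refine ⟨sSup A, hT, ?_⟩
  conv_lhs => rw [hft, hA]
  exact image_smul_Icc_eq_segment u (zero_le_one.trans hT)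

end NormedSpace

/-- If a Minkowski plane has a consistent set of `n` faces of the unit circle, consisting
of `n-1` flattenings and one point-face, then there are `n` points whose Fermat–Torricelli
set is a non-degenerate segment. -/
theorem ft_segment_of_consistent_flattenings_and_point
    {X : Type*} [NormedAddCommGroup X] [NormedSpace ℝ X]
    (hd : Module.finrank ℝ X = 2)
    {n : ℕ} (hn : 2 ≤ n) (φ : Fin n → (X →L[ℝ] ℝ))
    (hnorm : ∀ i, ‖φ i‖ = 1) (hsum : ∑ i, φ i = 0)
    (hflat : ∀ i : Fin n, (i : ℕ) < n - 1 →
      ∃ u v : X, u ≠ v ∧ u ∈ face (φ i) ∧ v ∈ face (φ i))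
    (hpoint : ∀ i : Fin n, (i : ℕ) = n - 1 → ∃ u : X, face (φ i) = {u}) :
    ∃ x : Fin n → X, ∃ a b : X, a ≠ b ∧ ft x = segment ℝ a b := by
  let j : Fin n := ⟨n - 1, by omega⟩
  obtain ⟨u, hu⟩ := hpoint j rfl
  have huj : u ∈ face (φ j) := hu ▸ mem_singleton u
  have hshift : ∀ i, ∃ w ∈ faceCone (φ i), u + w ∈ faceCone (φ i) ∧ (i = j → w = 0) := by
    intro i
    by_cases hi : (i : ℕ) < n - 1
    · obtain ⟨a, b, hab, ha, hb⟩ := hflat i hi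
      obtain ⟨w, hw, huw⟩ := exists_mem_faceCone_add_mem_faceCone hd (hnorm i).le hab ha hb u
      exact ⟨w, hw, huw, by rintro rfl; exact absurd hi (lt_irrefl _)⟩
    · obtain rfl : i = j := Fin.ext (by simp only [j]; omega)
      exact ⟨0, zero_mem_faceCone, by simpa using face_subset_faceCone huj, fun _ => rfl⟩
  choose w hw huw hwj using hshift
  obtain ⟨T, hT, hft⟩ :=
    exists_ft_neg_eq_segment (fun i => (hnorm i).le) hsum hu hw huw (hwj j rfl)
  have hu0 : u ≠ 0 := norm_ne_zero_iff.1 (huj.1 ▸ one_ne_zero)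
  exact ⟨-w, 0, T • u, (smul_ne_zero (by positivity) hu0).symm, hft⟩
end
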